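/- Let F be a field of characteristic 2 with 2-basis α₁,…,αₙ, and for each d ∈ {0,1}ⁿ let V_d ⊆ F be the F²-subspace D(B_d') ∪ {0} as follows: V₀ is the F²-span of {α^e : e ∈ {0,1}ⁿ, e ≠ 0}, and for d ≠ 0, V_d is the F²-span of {α^e : e ∈ {0,1}ⁿ ∖ {0,d}} ∪ {1 + α^d}. Then ⋂_{d ∈ {0,1}ⁿ} V_d = {0}. -/

import Mathlib

/-- The subfield of squares `F²` of a field of characteristic 2. -/
def sqSubfield (F : Type*) [Field F] [CharP F 2] : Subfield F where
  carrier := {x | ∃ y : F, y ^ 2 = x}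
  mul_mem' := by rintro a b ⟨y, rfl⟩ ⟨z, rfl⟩; exact ⟨y * z, by ring⟩
  one_mem' := ⟨1, one_pow 2⟩
  add_mem' := by
    rintro a b ⟨y, rfl⟩ ⟨z, rfl⟩
    exact ⟨y + z, by rw [add_sq]; linear_combination (y*z) * (CharP.cast_eq_zero F 2)⟩
  zero_mem' := ⟨0, by ring⟩
  neg_mem' := by rintro a ⟨y, rfl⟩; exact ⟨y, (CharTwo.neg_eq _).symm⟩
  inv_mem' := by rintro a ⟨y, rfl⟩; exact ⟨y⁻¹, by rw [inv_pow]⟩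

/-- The monomial `β₁^{d₁} ⋯ βₙ^{dₙ}`. -/
def mono {R : Type*} [CommRing R] {n : ℕ} (β : Fin n → R) (d : Fin n → Bool) : R :=
  ∏ i, if d i then β i else 1

/-- The diagonal bilinear `n`-fold Pfister form `⟨⟨β₁,…,βₙ⟩⟩_b`. -/
def bPf (F : Type*) [Field F] {n : ℕ} (β : Fin n → F) (v w : (Fin n → Bool) → F) : F :=
  ∑ d, mono β d * v d * w d

/-- Pure part of the bilinear Pfister form. -/
def bPfPure (F : Type*) [Field F] {n : ℕ} (β : Fin n → F)
    (v w : {d : Fin n → Bool // d ≠ fun _ => false} → F) : F :=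
  ∑ d, mono β d.1 * v d * w d

/-- Anisotropy of a bilinear form. -/
def BAniso (F : Type*) [Field F] {V : Type*} [AddCommGroup V] [Module F V]
    (B : V → V → F) : Prop :=
  ∀ v : V, v ≠ 0 → B v v ≠ 0

/-- Isometry of bilinear forms. -/
def BilinIsom (F : Type*) [Field F] {V W : Type*} [AddCommGroup V] [Module F V]
    [AddCommGroup W] [Module F W] (B₁ : V → V → F) (B₂ : W → W → F) : Prop :=
  ∃ e : V ≃ₗ[F] W, ∀ v w, B₂ (e v) (e w) = B₁ v w

/-- Isometry of quadratic forms (given as value functions). -/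
def QuadIsom (F : Type*) [Field F] {V W : Type*} [AddCommGroup V] [Module F V]
    [AddCommGroup W] [Module F W] (q₁ : V → F) (q₂ : W → F) : Prop :=
  ∃ e : V ≃ₗ[F] W, ∀ v, q₂ (e v) = q₁ v

/-- The quadratic Pfister form `⟨⟨β₁,…,β_m, a]]` as a value function. -/
def qPf (R : Type*) [CommRing R] {m : ℕ} (β : Fin m → R) (a : R)
    (x : (Fin m → Bool) → R × R) : R :=
  ∑ e, mono β e * ((x e).1 ^ 2 + (x e).1 * (x e).2 + a * (x e).2 ^ 2)

/-- Minimal index where `d` is `true`. -/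
noncomputable def minIdx {n : ℕ} (d : Fin n → Bool) (hd : d ≠ fun _ => false) : Fin n :=
  (Finset.univ.filter fun i => d i = true).min' (by
    obtain ⟨i, hi⟩ := Function.ne_iff.mp hd
    exact ⟨i, Finset.mem_filter.mpr ⟨Finset.mem_univ i, by simpa using hi⟩⟩)

/-- Remove the `ℓ`-th entry from a tuple. -/
def removeIdx {R : Type*} {n : ℕ} (α : Fin n → R) (ℓ : Fin n) (i : Fin (n - 1)) : R :=
  if h : (i : ℕ) < (ℓ : ℕ) then α ⟨i, by omega⟩ else α ⟨(i : ℕ) + 1, by omega⟩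

/-- First `n-1` entries of a tuple. -/
def front {R : Type*} {n : ℕ} (α : Fin n → R) (i : Fin (n - 1)) : R :=
  α ⟨i, by omega⟩

/-- Last entry of a tuple (junk value `0` if the tuple is empty). -/
def qlast {R : Type*} [CommRing R] {n : ℕ} (α : Fin n → R) : R :=
  if h : n = 0 then 0 else α ⟨n - 1, by omega⟩

/-- The `F²`-subspace `V_d = D(B_d') ∪ {0}`: for `d = 0` the span of the monomials
`α^e`, `e ≠ 0`; for `d ≠ 0` the span of `{α^e : e ∉ {0, d}} ∪ {1 + α^d}`. -/
noncomputable def Vsub (F : Type*) [Field F] [CharP F 2] {n : ℕ} (α : Fin n → F)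
    (d : Fin n → Bool) : Submodule (sqSubfield F) F :=
  if d = fun _ => false then
    Submodule.span (sqSubfield F)
      {x : F | ∃ e : Fin n → Bool, e ≠ (fun _ => false) ∧ mono α e = x}
  else
    Submodule.span (sqSubfield F)
      ({x : F | ∃ e : Fin n → Bool, e ≠ (fun _ => false) ∧ e ≠ d ∧ mono α e = x}
        ∪ {1 + mono α d})

/-! The monomials `α^e` form an `F²`-basis of `F`: since `αᵢ² ∈ F²`, a product of two monomials
is an `F²`-multiple of a monomial, so their span is a subalgebra containing the `αᵢ`, hence all
of `F`; as there are `2ⁿ = [F : F²]` of them, they are independent. For `x` in every `V_d`, the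
coordinate of `x` at `α^0 = 1` vanishes because `x ∈ V₀`, and for `d ≠ 0` the coordinates at `1`
and at `α^d` agree because `x ∈ V_d`; so all coordinates of `x` vanish. -/

section Monomials

variable {R : Type*} [CommRing R] {n : ℕ}

theorem mono_false (α : Fin n → R) : mono α (fun _ => false) = 1 := by
  simp [mono]

theorem mono_single (α : Fin n → R) (i : Fin n) : mono α (fun j => decide (j = i)) = α i := by
  rw [mono, Finset.prod_eq_single i (fun j _ hj => by simp [hj]) (by simp)]
  simp

theorem mono_mul_mono (α : Fin n → R) (e e' : Fin n → Bool) :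
    mono α e * mono α e' =
      (∏ i, if e i && e' i then α i ^ 2 else 1) * mono α (fun i => xor (e i) (e' i)) := by
  simp only [mono, ← Finset.prod_mul_distrib]
  refine Finset.prod_congr rfl fun i _ => ?_
  by_cases h : e i <;> by_cases h' : e' i <;> simp [h, h', sq]

variable {K : Type*} [CommRing K] [Algebra K R]

theorem span_range_mono_eq_adjoin (α : Fin n → R) (hsq : ∀ i, α i ^ 2 ∈ (⊥ : Subalgebra K R)) :
    Submodule.span K (Set.range (mono α)) =
      Subalgebra.toSubmodule (Algebra.adjoin K (Set.range α)) := by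
  set p := Submodule.span K (Set.range (mono α))
  have one_mem : (1 : R) ∈ p := mono_false α ▸ Submodule.subset_span ⟨_, rfl⟩
  have mul_le : p * p ≤ p := by
    rw [Submodule.span_mul_span, Submodule.span_le]
    rintro _ ⟨_, ⟨e, rfl⟩, _, ⟨e', rfl⟩, rfl⟩
    obtain ⟨c, hc⟩ := Algebra.mem_bot.mp <| Subalgebra.prod_mem (⊥ : Subalgebra K R)
      fun i _ => show (if e i && e' i then α i ^ 2 else 1) ∈ _ by split_ifs <;> simp [hsq]
    change mono α e * mono α e' ∈ p
    rw [mono_mul_mono, ← hc, ← Algebra.smul_def]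
    exact p.smul_mem c (Submodule.subset_span ⟨_, rfl⟩)
  apply le_antisymm
  · rw [Submodule.span_le]
    rintro _ ⟨e, rfl⟩
    exact Subalgebra.prod_mem _ fun i _ => by
      split_ifs
      exacts [Algebra.subset_adjoin ⟨i, rfl⟩, Subalgebra.one_mem _]
  · refine Algebra.adjoin_le (S := p.toSubalgebra one_mem fun x y hx hy =>
      mul_le (Submodule.mul_mem_mul hx hy)) ?_
    rintro _ ⟨i, rfl⟩
    exact mono_single α i ▸ Submodule.subset_span ⟨_, rfl⟩

end Monomials

namespace Module.Basis

variable {R M ι : Type*} [Ring R] [AddCommGroup M] [Module R M] (b : Basis ι R M) {i₀ d : ι}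

theorem repr_eq_of_mem_span_union_add (hd : d ≠ i₀) {x : M}
    (hx : x ∈ Submodule.span R (b '' {e | e ≠ i₀ ∧ e ≠ d} ∪ {b i₀ + b d})) :
    b.repr x d = b.repr x i₀ := by
  suffices Submodule.span R (b '' {e | e ≠ i₀ ∧ e ≠ d} ∪ {b i₀ + b d}) ≤
      LinearMap.ker (b.coord d - b.coord i₀) from
    sub_eq_zero.mp (this hx)
  rw [Submodule.span_le]
  rintro _ (⟨e, ⟨he₀, hed⟩, rfl⟩ | rfl)
  · simp [he₀.symm, hed.symm]
  · simp [hd, hd.symm]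

theorem iInf_eq_bot_of_le_span (i₀ : ι) (W : ι → Submodule R M)
    (hW₀ : W i₀ ≤ Submodule.span R (b '' {e | e ≠ i₀}))
    (hW : ∀ d ≠ i₀, W d ≤ Submodule.span R (b '' {e | e ≠ i₀ ∧ e ≠ d} ∪ {b i₀ + b d})) :
    ⨅ d, W d = ⊥ := by
  refine eq_bot_iff.mpr fun x hx => ?_
  rw [Submodule.mem_iInf] at hx
  have h₀ : b.repr x i₀ = 0 := by
    have := b.mem_span_image.mp (hW₀ (hx i₀))
    exact Finsupp.notMem_support_iff.mp fun h => this h rfl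
  suffices b.repr x = 0 by simpa using this
  ext d
  obtain rfl | hd := eq_or_ne d i₀
  · exact h₀
  · exact (b.repr_eq_of_mem_span_union_add hd (hW d hd (hx d))).trans h₀

end Module.Basis

/-- for a 2-basis `α₁,…,αₙ` of `F`, the intersection of the
subspaces `V_d`, `d ∈ {0,1}ⁿ`, is trivial. -/
theorem stmt_6 (F : Type*) [Field F] [CharP F 2] (n : ℕ)
    (α : Fin n → F)
    (hadj : IntermediateField.adjoin (sqSubfield F) (Set.range α) = ⊤)
    (hrk : Module.finrank (sqSubfield F) F = 2 ^ n) :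
    (⨅ d : Fin n → Bool, Vsub F α d) = ⊥ := by
  have : FiniteDimensional (sqSubfield F) F :=
    Module.finite_of_finrank_pos (by rw [hrk]; positivity)
  have hspan : Submodule.span (sqSubfield F) (Set.range (mono α)) = ⊤ := by
    rw [span_range_mono_eq_adjoin α fun i => ⟨⟨α i ^ 2, α i, rfl⟩, rfl⟩,
      ← IntermediateField.adjoin_toSubalgebra_of_isAlgebraic
        fun x _ => Algebra.IsAlgebraic.isAlgebraic x, hadj]
    rfl
  let b := basisOfTopLeSpanOfCardEqFinrank (mono α) hspan.ge (by simp [hrk])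
  have hb : ⇑b = mono α := coe_basisOfTopLeSpanOfCardEqFinrank _ _ _
  refine b.iInf_eq_bot_of_le_span (fun _ => false) _ ?_ fun d hd => ?_
  · simp only [Vsub, if_pos, hb]
    rfl
  · simp only [Vsub, if_neg hd, hb, mono_false, Set.image, Set.mem_ofPred_eq, and_assoc]
    rfl
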